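/- arXiv:2311.15103 — 3 statements merged into one kernel-verified Lean document; each statement's English description precedes it below -/
import Mathlib

section
/- Let e₁,…,e₆ be the standard basis of ℝ⁶, let uᵢ = 3eᵢ − e₁ − e₂ − e₃ and vᵢ = 3eᵢ − e₄ − e₅ − e₆ for 1 ≤ i ≤ 6, and let s = e₁+e₂+e₃+e₄+e₅+e₆. Then the convex hull of {6e₁ − s, 6e₂ − s, …, 6e₆ − s} equals the Minkowski sum (pointwise set addition) of the convex hull of {u₁,…,u₆} and the convex hull of {v₁,…,v₆}. -/
open Pointwise

/-- standard basis of ℝ⁶ -/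
noncomputable def e6 (i : Fin 6) : Fin 6 → ℝ := Pi.single i 1

/-- s = e₁ + ⋯ + e₆ -/
noncomputable def svec : Fin 6 → ℝ := e6 0 + e6 1 + e6 2 + e6 3 + e6 4 + e6 5

/-- uᵢ = 3eᵢ − e₁ − e₂ − e₃ -/
noncomputable def uvec (i : Fin 6) : Fin 6 → ℝ := (3 : ℝ) • e6 i - e6 0 - e6 1 - e6 2

/-- vᵢ = 3eᵢ − e₄ − e₅ − e₆ -/
noncomputable def vvec (i : Fin 6) : Fin 6 → ℝ := (3 : ℝ) • e6 i - e6 3 - e6 4 - e6 5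

/-- vertices of Δ : 6eᵢ − s -/
noncomputable def dvec (i : Fin 6) : Fin 6 → ℝ := (6 : ℝ) • e6 i - svec


lemma dvec_eq (i : Fin 6) : dvec i = uvec i + vvec i := by
  unfold dvec uvec vvec svec; module

lemma mid_eq (i j : Fin 6) :
    uvec i + vvec j = (1/2 : ℝ) • dvec i + (1/2 : ℝ) • dvec j := by
  unfold dvec uvec vvec svec; module

theorem stmt_2 :
    convexHull ℝ (Set.range dvec) =
      convexHull ℝ (Set.range uvec) + convexHull ℝ (Set.range vvec) := by
  rw [← convexHull_add]
  apply Set.Subset.antisymm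
  · apply convexHull_mono
    rintro _ ⟨i, rfl⟩
    exact ⟨uvec i, ⟨i, rfl⟩, vvec i, ⟨i, rfl⟩, (dvec_eq i).symm⟩
  · refine convexHull_min ?_ (convex_convexHull ℝ _)
    rintro _ ⟨_, ⟨i, rfl⟩, _, ⟨j, rfl⟩, rfl⟩
    show uvec i + vvec j ∈ _
    rw [mid_eq i j]
    exact (convex_convexHull ℝ _)
      (subset_convexHull ℝ (Set.range dvec) ⟨i, rfl⟩)
      (subset_convexHull ℝ (Set.range dvec) ⟨j, rfl⟩)
      (by norm_num) (by norm_num) (by norm_num)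
end

section
/- Let ψ ∈ ℂ and let t = (t₁,…,t₆) ∈ ℂ⁶ satisfy tᵢ ≠ 0 for all i, t₁+t₂+t₃ = 3ψ, t₄+t₅+t₆ = 3ψ, and t₁t₂t₃t₄t₅t₆ = 1. Let J be the 3×6 complex matrix with rows (1,1,1,0,0,0), (0,0,0,1,1,1), and (t₁⁻¹, t₂⁻¹, t₃⁻¹, t₄⁻¹, t₅⁻¹, t₆⁻¹). Then rank(J) < 3 if and only if t₁ = t₂ = t₃ = t₄ = t₅ = t₆ = ψ, and in that case necessarily ψ⁶ = 1. -/
lemma rank_sub_le (A : Matrix (Fin 3) (Fin 6) ℂ) (c : Fin 3 → Fin 6) :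
    (A.submatrix id c).rank ≤ A.rank := by
  have h : A.submatrix id c
      = A * Matrix.of (fun k l => if c l = k then (1:ℂ) else 0) := by
    ext i l
    simp [Matrix.mul_apply]
  rw [h]
  exact A.rank_mul_le_left _

theorem stmt_9 (ψ : ℂ) (t : Fin 6 → ℂ) (ht : ∀ i, t i ≠ 0)
    (h1 : t 0 + t 1 + t 2 = 3 * ψ) (h2 : t 3 + t 4 + t 5 = 3 * ψ)
    (h3 : t 0 * t 1 * t 2 * t 3 * t 4 * t 5 = 1) :
    let J : Matrix (Fin 3) (Fin 6) ℂ :=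
      !![1, 1, 1, 0, 0, 0;
         0, 0, 0, 1, 1, 1;
         (t 0)⁻¹, (t 1)⁻¹, (t 2)⁻¹, (t 3)⁻¹, (t 4)⁻¹, (t 5)⁻¹]
    (J.rank < 3 ↔ ∀ i, t i = ψ) ∧ ((∀ i, t i = ψ) → ψ ^ 6 = 1) := by
  intro J
  have hψ6 : (∀ i, t i = ψ) → ψ ^ 6 = 1 := by
    intro h
    rw [h 0, h 1, h 2, h 3, h 4, h 5] at h3
    linear_combination h3
  refine ⟨⟨?_, ?_⟩, hψ6⟩
  · intro hr
    have hminor : ∀ c : Fin 3 → Fin 6, (J.submatrix id c).det = 0 := by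
      intro c
      by_contra hd
      have hu : IsUnit (J.submatrix id c) :=
        (Matrix.isUnit_iff_isUnit_det _).mpr (isUnit_iff_ne_zero.mpr hd)
      have h3' : (J.submatrix id c).rank = 3 := by
        rw [Matrix.rank_of_isUnit _ hu]
        simp
      have := rank_sub_le J c
      omega
    have e01 : t 0 = t 1 := by
      have h' := hminor ![0, 1, 3]
      rw [Matrix.det_fin_three] at h'
      simp [J, Matrix.submatrix_apply, Matrix.cons_val_succ, show ((5:Fin 6)) = Fin.succ 4 from rfl] at h'
      have : (t 1)⁻¹ = (t 0)⁻¹ := by linear_combination -h'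
      exact (inv_injective this).symm
    have e02 : t 0 = t 2 := by
      have h' := hminor ![0, 2, 3]
      rw [Matrix.det_fin_three] at h'
      simp [J, Matrix.submatrix_apply, Matrix.cons_val_succ, show ((5:Fin 6)) = Fin.succ 4 from rfl] at h'
      have : (t 2)⁻¹ = (t 0)⁻¹ := by linear_combination -h'
      exact (inv_injective this).symm
    have e34 : t 3 = t 4 := by
      have h' := hminor ![0, 3, 4]
      rw [Matrix.det_fin_three] at h'
      simp [J, Matrix.submatrix_apply, Matrix.cons_val_succ, show ((5:Fin 6)) = Fin.succ 4 from rfl] at h'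
      have : (t 4)⁻¹ = (t 3)⁻¹ := by linear_combination h'
      exact (inv_injective this).symm
    have e35 : t 3 = t 5 := by
      have h' := hminor ![0, 3, 5]
      rw [Matrix.det_fin_three] at h'
      simp [J, Matrix.submatrix_apply, Matrix.cons_val_succ, show ((5:Fin 6)) = Fin.succ 4 from rfl] at h'
      have : (t 5)⁻¹ = (t 3)⁻¹ := by linear_combination h'
      exact (inv_injective this).symm
    have ht0 : t 0 = ψ := by
      have h3ne : (3 : ℂ) ≠ 0 := by norm_num
      apply mul_left_cancel₀ h3ne
      linear_combination h1 + e01 + e02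
    have ht3 : t 3 = ψ := by
      have h3ne : (3 : ℂ) ≠ 0 := by norm_num
      apply mul_left_cancel₀ h3ne
      linear_combination h2 + e34 + e35
    intro i
    fin_cases i
    · exact ht0
    · exact e01 ▸ ht0
    · exact e02 ▸ ht0
    · exact ht3
    · exact e34 ▸ ht3
    · exact e35 ▸ ht3
  · intro h
    have hψ : ψ ≠ 0 := by rw [← h 0]; exact ht 0
    have hJ : J = (!![1, 0; 0, 1; ψ⁻¹, ψ⁻¹] : Matrix (Fin 3) (Fin 2) ℂ) *
        (!![1, 1, 1, 0, 0, 0; 0, 0, 0, 1, 1, 1] : Matrix (Fin 2) (Fin 6) ℂ) := by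
      ext i j
      fin_cases i <;> fin_cases j <;>
        simp [J, Matrix.mul_apply, Fin.sum_univ_two, Matrix.cons_val_succ, show ((5:Fin 6)) = Fin.succ 4 from rfl, h 0, h 1, h 2, h 3, h 4, h 5] <;> try exact h _
    rw [hJ]
    have h1' := Matrix.rank_mul_le_right (!![1, 0; 0, 1; ψ⁻¹, ψ⁻¹] : Matrix (Fin 3) (Fin 2) ℂ)
        (!![1, 1, 1, 0, 0, 0; 0, 0, 0, 1, 1, 1] : Matrix (Fin 2) (Fin 6) ℂ)
    have h2' := Matrix.rank_le_card_height (!![1, 1, 1, 0, 0, 0; 0, 0, 0, 1, 1, 1] : Matrix (Fin 2) (Fin 6) ℂ)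
    simp at h2'
    omega
end

section
/- Let φ : ℂ[y₁,…,y₆] → ℂ[u₁,u₂,u₄,u₅,v₁,v₂,v₄,v₅] be the ℂ-algebra homomorphism between multivariate polynomial rings determined by φ(y₁) = u₁³v₁³, φ(y₂) = u₂³v₂³, φ(y₃) = u₁u₂u₄u₅, φ(y₄) = u₄³v₄³, φ(y₅) = u₅³v₅³, φ(y₆) = v₁v₂v₄v₅. Then the kernel of φ is the ideal generated by the single binomial y₁y₂y₄y₅ − y₃³y₆³. -/
open MvPolynomial

/-- Target variables: u₁ = X 0, u₂ = X 1, u₄ = X 2, u₅ = X 3,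
    v₁ = X 4, v₂ = X 5, v₄ = X 6, v₅ = X 7.
    φ(y₁) = u₁³v₁³, φ(y₂) = u₂³v₂³, φ(y₃) = u₁u₂u₄u₅,
    φ(y₄) = u₄³v₄³, φ(y₅) = u₅³v₅³, φ(y₆) = v₁v₂v₄v₅. -/
noncomputable def phi16 : MvPolynomial (Fin 6) ℂ →ₐ[ℂ] MvPolynomial (Fin 8) ℂ :=
  MvPolynomial.aeval
    (![X 0 ^ 3 * X 4 ^ 3, X 1 ^ 3 * X 5 ^ 3, X 0 * X 1 * X 2 * X 3,
       X 2 ^ 3 * X 6 ^ 3, X 3 ^ 3 * X 7 ^ 3, X 4 * X 5 * X 6 * X 7] :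
      Fin 6 → MvPolynomial (Fin 8) ℂ)

namespace Stmt16Aux

lemma vec6_5 {α : Type*} (a₀ a₁ a₂ a₃ a₄ a₅ : α) :
    ![a₀, a₁, a₂, a₃, a₄, a₅] (5 : Fin 6) = a₅ := rfl

/-- Exponent vectors of the images of the six variables. -/
noncomputable def m : Fin 6 → (Fin 8 →₀ ℕ)
  | 0 => Finsupp.single 0 3 + Finsupp.single 4 3
  | 1 => Finsupp.single 1 3 + Finsupp.single 5 3
  | 2 => Finsupp.single 0 1 + Finsupp.single 1 1 + Finsupp.single 2 1 + Finsupp.single 3 1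
  | 3 => Finsupp.single 2 3 + Finsupp.single 6 3
  | 4 => Finsupp.single 3 3 + Finsupp.single 7 3
  | 5 => Finsupp.single 4 1 + Finsupp.single 5 1 + Finsupp.single 6 1 + Finsupp.single 7 1

/-- The induced map on exponents. -/
noncomputable def E (a : Fin 6 →₀ ℕ) : Fin 8 →₀ ℕ := a.sum fun i n => n • m i

lemma E_add (a b : Fin 6 →₀ ℕ) : E (a + b) = E a + E b := by
  unfold E
  exact Finsupp.sum_add_index' (fun i => zero_smul _ _) (fun i n n' => add_smul n n' (m i))

lemma E_single (i : Fin 6) (n : ℕ) : E (Finsupp.single i n) = n • m i :=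
  Finsupp.sum_single_index (zero_smul _ _)

lemma E_apply (a : Fin 6 →₀ ℕ) (j : Fin 8) :
    E a j = a 0 * m 0 j + a 1 * m 1 j + a 2 * m 2 j + a 3 * m 3 j
      + a 4 * m 4 j + a 5 * m 5 j := by
  have h1 : E a = ∑ i : Fin 6, a i • m i :=
    Finsupp.sum_fintype _ _ (fun i => zero_smul _ _)
  rw [h1, Finsupp.finset_sum_apply, Fin.sum_univ_six]
  simp [Finsupp.smul_apply]

lemma X_mono (k : Fin 8) :
    (X k : MvPolynomial (Fin 8) ℂ) = monomial (Finsupp.single k 1) 1 :=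
  (pow_one (X k)).symm.trans X_pow_eq_monomial

lemma phi16_monomial (a : Fin 6 →₀ ℕ) (c : ℂ) :
    phi16 (monomial a c) = monomial (E a) c := by
  have hX : ∀ i : Fin 6, phi16 (X i) =
      (![X 0 ^ 3 * X 4 ^ 3, X 1 ^ 3 * X 5 ^ 3, X 0 * X 1 * X 2 * X 3,
         X 2 ^ 3 * X 6 ^ 3, X 3 ^ 3 * X 7 ^ 3, X 4 * X 5 * X 6 * X 7] :
        Fin 6 → MvPolynomial (Fin 8) ℂ) i := fun i => aeval_X _ i
  have h0 : phi16 (X 0) = monomial (m 0) 1 := by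
    rw [hX 0]
    show (X 0 ^ 3 * X 4 ^ 3 : MvPolynomial (Fin 8) ℂ) = _
    rw [X_pow_eq_monomial, X_pow_eq_monomial, monomial_mul, one_mul]; rfl
  have h1 : phi16 (X 1) = monomial (m 1) 1 := by
    rw [hX 1]
    show (X 1 ^ 3 * X 5 ^ 3 : MvPolynomial (Fin 8) ℂ) = _
    rw [X_pow_eq_monomial, X_pow_eq_monomial, monomial_mul, one_mul]; rfl
  have h2' : phi16 (X 2) = monomial (m 2) 1 := by
    rw [hX 2]
    show (X 0 * X 1 * X 2 * X 3 : MvPolynomial (Fin 8) ℂ) = _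
    rw [X_mono 0, X_mono 1, X_mono 2, X_mono 3, monomial_mul, monomial_mul,
      monomial_mul, one_mul, one_mul, one_mul]; rfl
  have h3 : phi16 (X 3) = monomial (m 3) 1 := by
    rw [hX 3]
    show (X 2 ^ 3 * X 6 ^ 3 : MvPolynomial (Fin 8) ℂ) = _
    rw [X_pow_eq_monomial, X_pow_eq_monomial, monomial_mul, one_mul]; rfl
  have h4 : phi16 (X 4) = monomial (m 4) 1 := by
    rw [hX 4]
    show (X 3 ^ 3 * X 7 ^ 3 : MvPolynomial (Fin 8) ℂ) = _
    rw [X_pow_eq_monomial, X_pow_eq_monomial, monomial_mul, one_mul]; rfl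
  have h5 : phi16 (X 5) = monomial (m 5) 1 := by
    rw [hX 5]
    show (X 4 * X 5 * X 6 * X 7 : MvPolynomial (Fin 8) ℂ) = _
    rw [X_mono 4, X_mono 5, X_mono 6, X_mono 7, monomial_mul, monomial_mul,
      monomial_mul, one_mul, one_mul, one_mul]; rfl
  have himg : ∀ i : Fin 6, phi16 (X i) = monomial (m i) 1 := by
    intro i
    fin_cases i
    · exact h0
    · exact h1
    · exact h2'
    · exact h3
    · exact h4
    · exact h5
  induction a using Finsupp.induction generalizing c with
  | zero =>
    simp only [monomial_zero']
    rw [show E 0 = 0 from Finsupp.sum_zero_index]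
    simp [algHom_C]
  | single_add i n a hi hn ih =>
    have h1 : (monomial (Finsupp.single i n + a) c : MvPolynomial (Fin 6) ℂ)
        = monomial (Finsupp.single i n) 1 * monomial a c := by
      rw [monomial_mul, one_mul]
    rw [h1, map_mul, ih, E_add, E_single]
    have h2 : phi16 (monomial (Finsupp.single i n) 1) = monomial (n • m i) 1 := by
      rw [← X_pow_eq_monomial, map_pow, himg, monomial_pow, one_pow]
    rw [h2, monomial_mul, one_mul]

/-- Amount we can reduce. -/
def t (a : Fin 6 →₀ ℕ) : ℕ := min (a 2 / 3) (a 5 / 3)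

/-- Normal form of an exponent vector. -/
noncomputable def rho (a : Fin 6 →₀ ℕ) : Fin 6 →₀ ℕ :=
  Finsupp.equivFunOnFinite.symm
    ![a 0 + t a, a 1 + t a, a 2 - 3 * t a, a 3 + t a, a 4 + t a, a 5 - 3 * t a]

lemma rho_apply (a : Fin 6 →₀ ℕ) (j : Fin 6) :
    rho a j = ![a 0 + t a, a 1 + t a, a 2 - 3 * t a,
                a 3 + t a, a 4 + t a, a 5 - 3 * t a] j :=
  congrFun (Finsupp.coe_equivFunOnFinite_symm _) j

def normal (a : Fin 6 →₀ ℕ) : Prop := a 2 < 3 ∨ a 5 < 3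

lemma ht2 (a : Fin 6 →₀ ℕ) : 3 * t a ≤ a 2 := by unfold t; omega

lemma ht5 (a : Fin 6 →₀ ℕ) : 3 * t a ≤ a 5 := by unfold t; omega

lemma normal_rho (a : Fin 6 →₀ ℕ) : normal (rho a) := by
  unfold normal
  rw [rho_apply, rho_apply, vec6_5, Matrix.cons_val_two]
  simp only [Matrix.tail_cons, Matrix.head_cons]
  unfold t
  omega

lemma E_rho (a : Fin 6 →₀ ℕ) : E (rho a) = E a := by
  have h2 := ht2 a
  have h5 := ht5 a
  ext j
  rw [E_apply, E_apply]
  simp only [rho_apply]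
  fin_cases j <;>
    simp [m, Finsupp.single_apply, vec6_5] <;>
    omega

lemma E_inj {a b : Fin 6 →₀ ℕ} (ha : normal a) (hb : normal b) (h : E a = E b) :
    a = b := by
  have key : ∀ j : Fin 8, E a j = E b j := fun j => by rw [h]
  have e0 := key 0; have e1 := key 1; have e2 := key 2; have e3 := key 3
  have e4 := key 4; have e5 := key 5; have e6 := key 6; have e7 := key 7
  rw [E_apply, E_apply] at e0 e1 e2 e3 e4 e5 e6 e7
  simp [m, Finsupp.single_apply] at e0 e1 e2 e3 e4 e5 e6 e7
  unfold normal at ha hb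
  ext i
  fin_cases i
  · show a 0 = b 0; omega
  · show a 1 = b 1; omega
  · show a 2 = b 2; omega
  · show a 3 = b 3; omega
  · show a 4 = b 4; omega
  · show a 5 = b 5; omega

lemma monomial_sub_rho_mem (a : Fin 6 →₀ ℕ) (c : ℂ) :
    monomial a c - monomial (rho a) c ∈
      Ideal.span {(X 0 * X 1 * X 3 * X 4 - X 2 ^ 3 * X 5 ^ 3 : MvPolynomial (Fin 6) ℂ)} := by
  have h2 := ht2 a
  have h5 := ht5 a
  set T := t a with hT
  set b : Fin 6 →₀ ℕ := Finsupp.equivFunOnFinite.symm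
    ![a 0, a 1, a 2 - 3 * T, a 3, a 4, a 5 - 3 * T] with hbdef
  have hbapp : ∀ j, b j = ![a 0, a 1, a 2 - 3 * T, a 3, a 4, a 5 - 3 * T] j :=
    fun j => congrFun (Finsupp.coe_equivFunOnFinite_symm _) j
  set w : Fin 6 →₀ ℕ := Finsupp.single 2 3 + Finsupp.single 5 3 with hwdef
  set w' : Fin 6 →₀ ℕ :=
    Finsupp.single 0 1 + Finsupp.single 1 1 + Finsupp.single 3 1 + Finsupp.single 4 1 with hw'def
  have hba : b + T • w = a := by
    ext j
    simp only [Finsupp.coe_add, Pi.add_apply, Finsupp.smul_apply, hwdef,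
      Finsupp.single_apply, smul_eq_mul, hbapp]
    fin_cases j <;> simp [vec6_5] <;> omega
  have hbr : b + T • w' = rho a := by
    ext j
    simp only [Finsupp.coe_add, Pi.add_apply, Finsupp.smul_apply, hw'def,
      Finsupp.single_apply, smul_eq_mul, hbapp, rho_apply, ← hT]
    fin_cases j <;> simp [vec6_5] <;> omega
  have hgw : (X 2 ^ 3 * X 5 ^ 3 : MvPolynomial (Fin 6) ℂ) = monomial w 1 := by
    rw [X_pow_eq_monomial, X_pow_eq_monomial, monomial_mul, one_mul, hwdef]
  have hgw' : (X 0 * X 1 * X 3 * X 4 : MvPolynomial (Fin 6) ℂ) = monomial w' 1 := by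
    have hx : ∀ k : Fin 6, (X k : MvPolynomial (Fin 6) ℂ) = monomial (Finsupp.single k 1) 1 :=
      fun k => (pow_one (X k)).symm.trans X_pow_eq_monomial
    rw [hx 0, hx 1, hx 3, hx 4, monomial_mul, monomial_mul, monomial_mul, hw'def]
    norm_num
  have key : monomial a c - monomial (rho a) c
      = monomial b c * ((monomial w 1) ^ T - (monomial w' 1) ^ T) := by
    rw [mul_sub, monomial_pow, monomial_pow, one_pow, monomial_mul, monomial_mul,
      mul_one, hba, hbr]
  rw [key, Ideal.mem_span_singleton]
  apply Dvd.dvd.mul_left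
  rw [hgw, hgw']
  have hd := sub_dvd_pow_sub_pow (monomial w' (1 : ℂ)) (monomial w 1) T
  have hneg : (monomial w (1 : ℂ)) ^ T - (monomial w' 1) ^ T
      = -((monomial w' (1 : ℂ)) ^ T - (monomial w 1) ^ T) := by ring
  rw [hneg]
  exact dvd_neg.mpr hd

lemma phi16_eq_sum (p : MvPolynomial (Fin 6) ℂ) :
    phi16 p = ∑ a ∈ p.support, monomial (E a) (coeff a p) := by
  conv_lhs => rw [as_sum p]
  rw [map_sum]
  exact Finset.sum_congr rfl fun a _ => phi16_monomial a _

end Stmt16Aux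

open Stmt16Aux in
theorem stmt_16 :
    RingHom.ker phi16 =
      Ideal.span {(X 0 * X 1 * X 3 * X 4 - X 2 ^ 3 * X 5 ^ 3 : MvPolynomial (Fin 6) ℂ)} := by
  apply le_antisymm
  · -- ker ≤ span
    intro p hp
    rw [RingHom.mem_ker] at hp
    set q : MvPolynomial (Fin 6) ℂ :=
      ∑ a ∈ p.support, monomial (rho a) (coeff a p) with hqdef
    have hpq : p - q ∈ Ideal.span
        {(X 0 * X 1 * X 3 * X 4 - X 2 ^ 3 * X 5 ^ 3 : MvPolynomial (Fin 6) ℂ)} := by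
      have : p - q = ∑ a ∈ p.support,
          (monomial a (coeff a p) - monomial (rho a) (coeff a p)) := by
        rw [Finset.sum_sub_distrib, hqdef, ← as_sum p]
      rw [this]
      exact Ideal.sum_mem _ fun a _ => monomial_sub_rho_mem a _
    have hq0 : phi16 q = 0 := by
      have h1 : phi16 q = ∑ a ∈ p.support, monomial (E (rho a)) (coeff a p) := by
        rw [hqdef, map_sum]
        exact Finset.sum_congr rfl fun a _ => phi16_monomial _ _
      rw [h1]
      simp_rw [E_rho]
      rw [← phi16_eq_sum, hp]
    have hqnormal : ∀ d ∈ q.support, normal d := by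
      intro d hd
      by_contra hnd
      apply (mem_support_iff.mp hd)
      rw [hqdef, coeff_sum]
      apply Finset.sum_eq_zero
      intro a _
      rw [coeff_monomial, if_neg]
      intro hra
      exact hnd (hra ▸ normal_rho a)
    have hq : q = 0 := by
      apply MvPolynomial.ext
      intro d
      rw [coeff_zero]
      by_cases hd : d ∈ q.support
      · have hnd := hqnormal d hd
        have hco : coeff (E d) (phi16 q) = coeff d q := by
          rw [phi16_eq_sum q, coeff_sum]
          rw [Finset.sum_eq_single d]
          · rw [coeff_monomial, if_pos rfl]
          · intro a ha hne
            rw [coeff_monomial, if_neg]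
            intro hEE
            exact hne (E_inj (hqnormal a ha) hnd hEE)
          · intro hd'
            exact absurd hd hd'
        rw [hq0, coeff_zero] at hco
        exact hco.symm
      · exact notMem_support_iff.mp hd
    rw [hq, sub_zero] at hpq
    exact hpq
  · -- span ≤ ker
    rw [Ideal.span_le, Set.singleton_subset_iff]
    rw [SetLike.mem_coe, RingHom.mem_ker]
    simp only [map_sub, map_mul, map_pow, phi16, aeval_X]
    simp only [Matrix.cons_val_zero, Matrix.cons_val_one, Matrix.head_cons,
      Matrix.cons_val_two, Matrix.cons_val_three, Matrix.cons_val_four,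
      Matrix.tail_cons, Stmt16Aux.vec6_5]
    ring
end
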